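/- arXiv:1804.05255 — 5 statements merged into one kernel-verified Lean document; each statement's English description precedes it below -/
import Mathlib

section
/- Let ξ ∈ 𝒞, let w ∈ ℂ with |w| < r, and let b ∈ ℂ with |b| = r. Then (−r²/(2πi b)) ∮_{|a|=r} (Φ(a) + Φ(b)*) ξ / ((1 − a·conj(b))(a − conj(w))) da = −(r²/b) · ((Φ(b)* + Φ(conj(w)))/(1 − conj(b)·conj(w))) ξ, where the contour integral is over the positively oriented circle of radius r centered at 0. -/
open ComplexConjugate

/-- the Cauchy-formula evaluation
`(-r²/(2πib)) ∮_{|a|=r} (Φ(a)+Φ(b)*)ξ /((1-a·conj b)(a-conj w)) da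
  = -(r²/b)·(Φ(b)* + Φ(conj w))/(1-conj b·conj w) ξ` for `|w| < r`, `|b| = r`. -/
theorem statement4 {C : Type*} [NormedAddCommGroup C] [InnerProductSpace ℂ C] [CompleteSpace C]
    (r r₀ : ℝ) (hr0 : 0 < r) (hrr0 : r < r₀) (hr01 : r₀ < 1)
    (Φ : ℂ → C →L[ℂ] C)
    (hΦa : AnalyticOnNhd ℂ Φ (Metric.ball (0 : ℂ) r₀))
    (hΦc : ContinuousOn Φ (Metric.closedBall (0 : ℂ) r₀))
    (ξ : C) (w b : ℂ) (hw : ‖w‖ < r) (hb : ‖b‖ = r) :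
    (-(r : ℂ) ^ 2 / (2 * (Real.pi : ℂ) * Complex.I * b)) •
        (∮ a in C(0, r), ((1 - a * conj b) * (a - conj w))⁻¹ •
          ((Φ a + ContinuousLinearMap.adjoint (Φ b)) ξ))
      = (-(r : ℂ) ^ 2 / b) • ((1 - conj b * conj w)⁻¹ •
          ((ContinuousLinearMap.adjoint (Φ b) + Φ (conj w)) ξ)) := by
  set g : ℂ → C := fun a => (1 - a * conj b)⁻¹ • ((Φ a + ContinuousLinearMap.adjoint (Φ b)) ξ)
    with hg_def
  have hne : ∀ a ∈ Metric.ball (0 : ℂ) r₀, 1 - a * conj b ≠ 0 := by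
    intro a ha h
    have ha' : ‖a‖ < r₀ := by simpa using ha
    have h1 : a * conj b = 1 := by linear_combination -h
    have : ‖a * conj b‖ < 1 := by
      rw [norm_mul, RCLike.norm_conj, hb]
      nlinarith [norm_nonneg a]
    rw [h1, norm_one] at this
    exact lt_irrefl 1 this
  have hgd : DifferentiableOn ℂ g (Metric.ball (0 : ℂ) r₀) := by
    apply DifferentiableOn.smul
    · apply DifferentiableOn.inv
      · exact (differentiableOn_const 1).sub
          ((differentiableOn_id).mul (differentiableOn_const _))
      · exact hne
    · exact DifferentiableOn.clm_apply
        ((hΦa.differentiableOn).add (differentiableOn_const _)) (differentiableOn_const _)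
  have hsub : Metric.closedBall (0 : ℂ) r ⊆ Metric.ball (0 : ℂ) r₀ :=
    Metric.closedBall_subset_ball hrr0
  have hg : DiffContOnCl ℂ g (Metric.ball (0 : ℂ) r) := by
    apply DifferentiableOn.diffContOnCl
    rw [closure_ball (0 : ℂ) hr0.ne']
    exact hgd.mono hsub
  have hwmem : conj w ∈ Metric.ball (0 : ℂ) r := by
    simpa [RCLike.norm_conj] using hw
  have key := hg.circleIntegral_sub_inv_smul hwmem
  have heq : (∮ a in C(0, r), ((1 - a * conj b) * (a - conj w))⁻¹ •
      ((Φ a + ContinuousLinearMap.adjoint (Φ b)) ξ))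
      = ∮ a in C(0, r), (a - conj w)⁻¹ • g a := by
    apply circleIntegral.integral_congr hr0.le
    intro a _
    simp only [hg_def, mul_inv, smul_smul, mul_comm]
  rw [heq, key]
  have hb0 : b ≠ 0 := by
    intro h; rw [h, norm_zero] at hb; exact hr0.ne hb
  have hpi : (2 * (Real.pi : ℂ) * Complex.I) ≠ 0 := by
    simp [Real.pi_ne_zero, Complex.I_ne_zero]
  rw [smul_smul, hg_def]
  have hc : -(r : ℂ) ^ 2 / (2 * (Real.pi : ℂ) * Complex.I * b) * (2 * (Real.pi : ℂ) * Complex.I)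
      = -(r : ℂ) ^ 2 / b := by
    field_simp
  rw [hc, smul_smul, smul_smul]
  congr 2
  · ring_nf
  · rw [add_comm]
end

section
/- Let (Φ_u)_{u≥0} be bounded operators on 𝒞, let M > 0 and 0 < r < r₀ < 1 with ‖Φ_u‖ ≤ M / r₀^u for all u ≥ 0, and set R = 1/r. Then there exists a constant K > 0 such that for all sequences (f_v)_{v≥1} and (g_u)_{u≥1} in 𝒞 with Σ_{v=1}^∞ R^{2v} ‖f_v‖² < ∞ and Σ_{u=1}^∞ R^{2u} ‖g_u‖² < ∞, the double series Σ_{v=1}^∞ Σ_{u=1}^{v} ⟨Φ_{v−u} f_v, g_u⟩_𝒞 + Σ_{u=1}^∞ Σ_{v=1}^{u} ⟨Φ*_{u−v} f_v, g_u⟩_𝒞 converges absolutely and its modulus is at most K · (Σ_{v=1}^∞ R^{2v} ‖f_v‖²)^{1/2} · (Σ_{u=1}^∞ R^{2u} ‖g_u‖²)^{1/2}. -/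
noncomputable section

/-- The inner product of the paper, linear in the first entry:
`⟨x, y⟩_𝒞 := ⟪y, x⟫` (Mathlib's inner product is conjugate-linear in the first entry). -/
def ip {C : Type*} [NormedAddCommGroup C] [InnerProductSpace ℂ C] (x y : C) : ℂ := inner ℂ y x

/-! Put `a v = R^(v+1) ‖f v‖`, `b u = R^(u+1) ‖g u‖` and `q = r / r₀ < 1`. Since `R ≥ 1`,
`‖⟨Φ_{v-u} f_v, g_u⟩‖ ≤ M r₀^{-(v-u)} ‖f_v‖ ‖g_u‖ ≤ M q^{v-u} a_v b_u`. On the `k`-th subdiagonal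
Cauchy–Schwarz bounds `∑ᵤ a_{u+k} b_u` by `‖a‖₂ ‖b‖₂`, so summing the geometric factor over `k`
bounds the triangular sum by `M ‖a‖₂ ‖b‖₂ / (1 - q)`. The adjoint half is the same sum with `f`
and `g` exchanged, because `‖⟨Φ* x, y⟩‖ = ‖⟨Φ y, x⟩‖`. -/

open Finset

theorem hasSum_sum_antidiagonal_of_summable {α A : Type*} [AddCommMonoid α] [TopologicalSpace α]
    [ContinuousAdd α] [T3Space α] [AddCommMonoid A] [HasAntidiagonal A] {F : A × A → α}
    (hF : Summable F) : HasSum (fun n => ∑ p ∈ antidiagonal n, F p) (∑' p, F p) :=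
  (HasAntidiagonal.sigmaAntidiagonalEquivProd.hasSum_iff.mpr hF.hasSum).sigma
    fun n => (antidiagonal n).hasSum F

theorem summable_mul_and_tsum_mul_le_sqrt {ι : Type*} {a b : ι → ℝ} (ha0 : ∀ i, 0 ≤ a i)
    (hb0 : ∀ i, 0 ≤ b i) (ha : Summable fun i => a i ^ 2) (hb : Summable fun i => b i ^ 2) :
    Summable (fun i => a i * b i) ∧
      ∑' i, a i * b i ≤ √(∑' i, a i ^ 2) * √(∑' i, b i ^ 2) := by
  have := Real.summable_and_inner_le_Lp_mul_Lq_tsum_of_nonneg .two_two ha0 hb0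
    (by simpa [Real.rpow_two] using ha) (by simpa [Real.rpow_two] using hb)
  simpa [Real.rpow_two, Real.sqrt_eq_rpow] using this

theorem summable_mul_shift_and_tsum_le {a b : ℕ → ℝ} (ha0 : ∀ i, 0 ≤ a i) (hb0 : ∀ i, 0 ≤ b i)
    (ha : Summable fun i => a i ^ 2) (hb : Summable fun i => b i ^ 2) (k : ℕ) :
    Summable (fun u => a (u + k) * b u) ∧
      ∑' u, a (u + k) * b u ≤ √(∑' i, a i ^ 2) * √(∑' i, b i ^ 2) := by
  have hinj : Function.Injective (· + k) := add_left_injective k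
  obtain ⟨hs, hle⟩ := summable_mul_and_tsum_mul_le_sqrt (fun u => ha0 (u + k)) hb0
    (ha.comp_injective hinj) hb
  refine ⟨hs, hle.trans ?_⟩
  exact mul_le_mul_of_nonneg_right (Real.sqrt_le_sqrt
    (tsum_comp_le_tsum_of_inj ha (fun i => sq_nonneg _) hinj)) (Real.sqrt_nonneg _)

theorem summable_sum_range_pow_sub_mul_and_tsum_le {a b : ℕ → ℝ} {q : ℝ} (hq0 : 0 ≤ q)
    (hq1 : q < 1) (ha0 : ∀ i, 0 ≤ a i) (hb0 : ∀ i, 0 ≤ b i)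
    (ha : Summable fun i => a i ^ 2) (hb : Summable fun i => b i ^ 2) :
    Summable (fun v => ∑ u ∈ range (v + 1), q ^ (v - u) * (a v * b u)) ∧
      ∑' v, ∑ u ∈ range (v + 1), q ^ (v - u) * (a v * b u)
        ≤ (1 - q)⁻¹ * (√(∑' i, a i ^ 2) * √(∑' i, b i ^ 2)) := by
  set AB := √(∑' i, a i ^ 2) * √(∑' i, b i ^ 2)
  -- `F (k, u)` is the entry on the `k`-th subdiagonal, in column `u`.
  let F : ℕ × ℕ → ℝ := fun p => q ^ p.1 * (a (p.2 + p.1) * b p.2)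
  have hF0 : 0 ≤ F := fun p => mul_nonneg (pow_nonneg hq0 _) (mul_nonneg (ha0 _) (hb0 _))
  have hdiag : ∀ k, Summable (fun u => F (k, u)) ∧ ∑' u, F (k, u) ≤ q ^ k * AB := by
    intro k
    obtain ⟨hs, hle⟩ := summable_mul_shift_and_tsum_le ha0 hb0 ha hb k
    refine ⟨hs.mul_left (q ^ k), ?_⟩
    show ∑' u, q ^ k * (a (u + k) * b u) ≤ q ^ k * AB
    rw [tsum_mul_left]
    exact mul_le_mul_of_nonneg_left hle (pow_nonneg hq0 k)
  have hgeom : HasSum (fun k => q ^ k * AB) ((1 - q)⁻¹ * AB) :=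
    (hasSum_geometric_of_lt_one hq0 hq1).mul_right AB
  have hdiags : Summable fun k => ∑' u, F (k, u) :=
    .of_nonneg_of_le (fun k => tsum_nonneg fun u => hF0 _) (fun k => (hdiag k).2) hgeom.summable
  have hF : Summable F := (summable_prod_of_nonneg hF0).2 ⟨fun k => (hdiag k).1, hdiags⟩
  have hrows : ∀ v, ∑ p ∈ antidiagonal v, F p = ∑ u ∈ range (v + 1), q ^ (v - u) * (a v * b u) := by
    intro v
    rw [← Nat.sum_antidiagonal_swap, Nat.sum_antidiagonal_eq_sum_range_succ_mk]
    refine sum_congr rfl fun u hu => ?_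
    simp only [F, Prod.swap_prod_mk, Nat.add_sub_cancel' (mem_range_succ_iff.1 hu)]
  have hsum := hasSum_sum_antidiagonal_of_summable hF
  simp only [hrows] at hsum
  refine ⟨hsum.summable, ?_⟩
  calc _ = ∑' p, F p := hsum.tsum_eq
    _ = ∑' k, ∑' u, F (k, u) := hF.tsum_prod' fun k => (hdiag k).1
    _ ≤ ∑' k, q ^ k * AB := hdiags.tsum_le_tsum (fun k => (hdiag k).2) hgeom.summable
    _ = _ := hgeom.tsum_eq

theorem norm_ip_apply_le {C : Type*} [NormedAddCommGroup C] [InnerProductSpace ℂ C]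
    (T : C →L[ℂ] C) (x y : C) : ‖ip (T x) y‖ ≤ ‖T‖ * ‖x‖ * ‖y‖ :=
  (norm_inner_le_norm _ _).trans <| by
    rw [mul_comm]; exact mul_le_mul_of_nonneg_right (T.le_opNorm x) (norm_nonneg y)

theorem norm_ip_adjoint_apply {C : Type*} [NormedAddCommGroup C] [InnerProductSpace ℂ C]
    [CompleteSpace C] (T : C →L[ℂ] C) (x y : C) :
    ‖ip (ContinuousLinearMap.adjoint T x) y‖ = ‖ip (T y) x‖ := by
  rw [ip, ip, ContinuousLinearMap.adjoint_inner_right, ← inner_conj_symm, RCLike.norm_conj]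

theorem div_pow_le_mul_inv_mul_pow {M R r₀ : ℝ} (hM : 0 ≤ M) (hR : 1 ≤ R) (hr₀ : 0 < r₀)
    {k n : ℕ} (hkn : k ≤ n) : M / r₀ ^ k ≤ M * (R * r₀)⁻¹ ^ k * R ^ n := by
  calc M / r₀ ^ k = M * (R * r₀)⁻¹ ^ k * R ^ k := by rw [inv_pow, mul_pow]; field_simp
    _ ≤ M * (R * r₀)⁻¹ ^ k * R ^ n := by gcongr

theorem summable_and_tsum_norm_ip_le {C : Type*} [NormedAddCommGroup C] [InnerProductSpace ℂ C]
    (Φ : ℕ → C →L[ℂ] C) {M R r₀ : ℝ} (hR : 1 ≤ R) (hRr₀ : 1 < R * r₀)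
    (hΦ : ∀ k, ‖Φ k‖ ≤ M / r₀ ^ k) {f g : ℕ → C}
    (hf : Summable fun v => R ^ (2 * (v + 1)) * ‖f v‖ ^ 2)
    (hg : Summable fun u => R ^ (2 * (u + 1)) * ‖g u‖ ^ 2) :
    Summable (fun v => ∑ u ∈ range (v + 1), ‖ip (Φ (v - u) (f v)) (g u)‖) ∧
      ∑' v, ∑ u ∈ range (v + 1), ‖ip (Φ (v - u) (f v)) (g u)‖
        ≤ M * (1 - (R * r₀)⁻¹)⁻¹ * (√(∑' v, R ^ (2 * (v + 1)) * ‖f v‖ ^ 2) *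
            √(∑' u, R ^ (2 * (u + 1)) * ‖g u‖ ^ 2)) := by
  have hR0 : 0 < R := one_pos.trans_le hR
  have hr₀ : 0 < r₀ := pos_of_mul_pos_right (one_pos.trans hRr₀) hR0.le
  have hM : 0 ≤ M := (norm_nonneg _).trans (by simpa using hΦ 0)
  have hweight : ∀ (x : ℕ → C) (v : ℕ), (R ^ (v + 1) * ‖x v‖) ^ 2 = R ^ (2 * (v + 1)) * ‖x v‖ ^ 2 :=
    fun x v => by ring
  have hq0 : 0 ≤ (R * r₀)⁻¹ := by positivity
  have hq1 : (R * r₀)⁻¹ < 1 := inv_lt_one_of_one_lt₀ hRr₀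
  obtain ⟨hS, hT⟩ := summable_sum_range_pow_sub_mul_and_tsum_le hq0 hq1
    (a := fun v => R ^ (v + 1) * ‖f v‖) (b := fun u => R ^ (u + 1) * ‖g u‖)
    (fun v => by positivity) (fun u => by positivity)
    (by simpa only [hweight] using hf) (by simpa only [hweight] using hg)
  simp only [hweight] at hT
  have hbound : ∀ v, ∑ u ∈ range (v + 1), ‖ip (Φ (v - u) (f v)) (g u)‖
      ≤ M * ∑ u ∈ range (v + 1),
        (R * r₀)⁻¹ ^ (v - u) * (R ^ (v + 1) * ‖f v‖ * (R ^ (u + 1) * ‖g u‖)) := by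
    intro v
    rw [mul_sum]
    refine sum_le_sum fun u _ => ?_
    calc ‖ip (Φ (v - u) (f v)) (g u)‖ ≤ ‖Φ (v - u)‖ * ‖f v‖ * ‖g u‖ := norm_ip_apply_le _ _ _
      _ ≤ M / r₀ ^ (v - u) * ‖f v‖ * ‖g u‖ := by gcongr; exact hΦ _
      _ ≤ M * (R * r₀)⁻¹ ^ (v - u) * R ^ (v + 1 + (u + 1)) * ‖f v‖ * ‖g u‖ := by
          gcongr; exact div_pow_le_mul_inv_mul_pow hM hR hr₀ (by omega)
      _ = _ := by ring
  have hS' := hS.mul_left M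
  have hsum := Summable.of_nonneg_of_le (fun v => sum_nonneg fun u _ => norm_nonneg _) hbound hS'
  refine ⟨hsum, ?_⟩
  calc _ ≤ ∑' v, M * ∑ u ∈ range (v + 1),
        (R * r₀)⁻¹ ^ (v - u) * (R ^ (v + 1) * ‖f v‖ * (R ^ (u + 1) * ‖g u‖)) :=
        hsum.tsum_le_tsum hbound hS'
    _ ≤ _ := by rw [tsum_mul_left, mul_assoc]; exact mul_le_mul_of_nonneg_left hT hM

/-- joint continuity of the Hermitian form
`[f,g] = Σ_{v≥1} Σ_{u=1}^v ⟨Φ_{v-u} f_v, g_u⟩ + Σ_{u≥1} Σ_{v=1}^u ⟨Φ*_{u-v} f_v, g_u⟩`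
on `ℓ_{2,r}(ℕ,𝒞)`, given `‖Φ_u‖ ≤ M/r₀^u`. (`f v` is the coefficient `f_{v+1}`.) -/
theorem statement9 {C : Type*} [NormedAddCommGroup C] [InnerProductSpace ℂ C] [CompleteSpace C]
    (Φc : ℕ → C →L[ℂ] C) (M r r₀ R : ℝ)
    (hM : 0 < M) (hr0 : 0 < r) (hrr0 : r < r₀) (hr01 : r₀ < 1) (hR : R = 1 / r)
    (hΦ : ∀ u : ℕ, ‖Φc u‖ ≤ M / r₀ ^ u) :
    ∃ K > 0, ∀ f g : ℕ → C,
      (Summable fun v : ℕ => R ^ (2 * (v + 1)) * ‖f v‖ ^ 2) →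
      (Summable fun u : ℕ => R ^ (2 * (u + 1)) * ‖g u‖ ^ 2) →
      (Summable fun v : ℕ =>
          ∑ u ∈ Finset.range (v + 1), ‖ip (Φc (v - u) (f v)) (g u)‖) ∧
      (Summable fun u : ℕ =>
          ∑ v ∈ Finset.range (u + 1),
            ‖ip (ContinuousLinearMap.adjoint (Φc (u - v)) (f v)) (g u)‖) ∧
      ‖(∑' v : ℕ, ∑ u ∈ Finset.range (v + 1), ip (Φc (v - u) (f v)) (g u))
            + ∑' u : ℕ, ∑ v ∈ Finset.range (u + 1),
                ip (ContinuousLinearMap.adjoint (Φc (u - v)) (f v)) (g u)‖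
        ≤ K * Real.sqrt (∑' v : ℕ, R ^ (2 * (v + 1)) * ‖f v‖ ^ 2) *
            Real.sqrt (∑' u : ℕ, R ^ (2 * (u + 1)) * ‖g u‖ ^ 2) := by
  have hR1 : 1 ≤ R := by rw [hR, le_div_iff₀ hr0]; linarith
  have hRr₀ : 1 < R * r₀ := by rw [hR, one_div_mul_eq_div, one_lt_div hr0]; exact hrr0
  have hq : 0 < 1 - (R * r₀)⁻¹ := sub_pos.2 (inv_lt_one_of_one_lt₀ hRr₀)
  refine ⟨2 * M * (1 - (R * r₀)⁻¹)⁻¹, by positivity, fun f g hf hg => ?_⟩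
  obtain ⟨hs₁, ht₁⟩ := summable_and_tsum_norm_ip_le Φc hR1 hRr₀ hΦ hf hg
  obtain ⟨hs₂, ht₂⟩ := summable_and_tsum_norm_ip_le Φc hR1 hRr₀ hΦ hg hf
  have hn₁ := tsum_of_norm_bounded hs₁.hasSum fun v => norm_sum_le _ _
  have hn₂ := tsum_of_norm_bounded (f := fun u => ∑ v ∈ range (u + 1),
      ip (ContinuousLinearMap.adjoint (Φc (u - v)) (f v)) (g u)) hs₂.hasSum
    fun u => (norm_sum_le _ _).trans_eq (sum_congr rfl fun v _ => norm_ip_adjoint_apply _ _ _)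
  refine ⟨hs₁, by simpa only [norm_ip_adjoint_apply] using hs₂, (norm_add_le _ _).trans ?_⟩
  linarith
end
end

section
/- Let H be a complex Hilbert space, let P be a bounded self-adjoint operator on H, let |P| denote the positive square root of P², and let T and S be bounded operators on H satisfying T* P = P S. Then (T* |P| T)² ≤ ‖T‖² ‖S‖² P², where ≤ is the Loewner order on bounded self-adjoint operators (A ≤ B iff ⟨(B−A)x, x⟩ ≥ 0 for all x). -/
/-
Write `A = T* |P| T`, which is self-adjoint, so `⟪A² x, x⟫ = ‖A x‖²` and `⟪P² x, x⟫ = ‖P x‖²`;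
the claim is therefore `‖A x‖ ≤ ‖T‖ ‖S‖ ‖P x‖`. Since `|P|² = P²`, the operators `|P|` and `P`
have the same norm on every vector, and taking adjoints in `T* P = P S` gives `P T = S* P`. Hence
`‖A x‖ ≤ ‖T‖ ‖|P| T x‖ = ‖T‖ ‖P T x‖ = ‖T‖ ‖S* P x‖ ≤ ‖T‖ ‖S‖ ‖P x‖`.
-/

noncomputable section

open ContinuousLinearMap
open scoped ComplexOrder

/-- The Loewner order on bounded operators: `A ≤ B` iff `⟨(B-A)x, x⟩ ≥ 0` for all `x`
(the inequality being in the partial order of `ℂ`, which forces the value to be real). -/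
def LoewnerLE {H : Type*} [NormedAddCommGroup H] [InnerProductSpace ℂ H]
    (A B : H →L[ℂ] H) : Prop :=
  ∀ x : H, 0 ≤ (inner ℂ ((B - A) x) x : ℂ)

namespace ContinuousLinearMap

variable {E F G : Type*} [NormedAddCommGroup E] [InnerProductSpace ℂ E] [CompleteSpace E]
  [NormedAddCommGroup F] [InnerProductSpace ℂ F] [CompleteSpace F]
  [NormedAddCommGroup G] [InnerProductSpace ℂ G] [CompleteSpace G]

theorem norm_apply_eq_of_adjoint_comp_self_eq {A : E →L[ℂ] F} {B : E →L[ℂ] G}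
    (h : adjoint A ∘L A = adjoint B ∘L B) (x : E) : ‖A x‖ = ‖B x‖ := by
  rw [apply_norm_eq_sqrt_inner_adjoint_left, h, ← apply_norm_eq_sqrt_inner_adjoint_left]

theorem inner_adjoint_comp_self_apply (A : E →L[ℂ] F) (x : E) :
    inner ℂ ((adjoint A ∘L A) x) x = ((‖A x‖ ^ 2 : ℝ) : ℂ) := by
  rw [comp_apply, adjoint_inner_left, inner_self_eq_norm_sq_to_K]
  norm_cast

theorem comp_eq_adjoint_comp_of_adjoint_comp_eq {P T S : E →L[ℂ] E} (hP : IsSelfAdjoint P)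
    (h : adjoint T ∘L P = P ∘L S) : P ∘L T = adjoint S ∘L P := by
  simpa [adjoint_comp, hP.adjoint_eq] using congrArg adjoint h

theorem loewnerLE_adjoint_comp_self_of_norm_le {A : E →L[ℂ] F} {B : E →L[ℂ] G} {c : ℝ}
    (h : ∀ x, ‖A x‖ ≤ c * ‖B x‖) :
    LoewnerLE (adjoint A ∘L A) (((c ^ 2 : ℝ) : ℂ) • (adjoint B ∘L B)) := by
  intro x
  rw [sub_apply, inner_sub_left, smul_apply, inner_smul_left, inner_adjoint_comp_self_apply,
    inner_adjoint_comp_self_apply, Complex.conj_ofReal, ← Complex.ofReal_mul,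
    ← Complex.ofReal_sub, Complex.zero_le_real, sub_nonneg, ← mul_pow]
  exact pow_le_pow_left₀ (norm_nonneg _) (h x) 2

theorem norm_adjoint_comp_comp_apply_le {P absP T S : E →L[ℂ] E} (hP : IsSelfAdjoint P)
    (habs_sa : IsSelfAdjoint absP) (habs_sq : absP ∘L absP = P ∘L P)
    (hTS : adjoint T ∘L P = P ∘L S) (x : E) :
    ‖(adjoint T ∘L absP ∘L T) x‖ ≤ ‖T‖ * ‖S‖ * ‖P x‖ := by
  have habs_norm : ∀ y, ‖absP y‖ = ‖P y‖ :=
    norm_apply_eq_of_adjoint_comp_self_eq (by rw [habs_sa.adjoint_eq, hP.adjoint_eq, habs_sq])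
  have hPT : P (T x) = adjoint S (P x) := by
    rw [← comp_apply, comp_eq_adjoint_comp_of_adjoint_comp_eq hP hTS, comp_apply]
  calc ‖adjoint T (absP (T x))‖ ≤ ‖T‖ * ‖absP (T x)‖ := by
        simpa only [← star_eq_adjoint, norm_star] using (adjoint T).le_opNorm _
    _ = ‖T‖ * ‖adjoint S (P x)‖ := by rw [habs_norm, hPT]
    _ ≤ ‖T‖ * (‖S‖ * ‖P x‖) := by
        gcongr
        simpa only [← star_eq_adjoint, norm_star] using (adjoint S).le_opNorm _
    _ = ‖T‖ * ‖S‖ * ‖P x‖ := by ring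

end ContinuousLinearMap

theorem statement10_general {H : Type*} [NormedAddCommGroup H] [InnerProductSpace ℂ H]
    [CompleteSpace H]
    (P absP T S : H →L[ℂ] H)
    (hP : IsSelfAdjoint P)
    (habs_sa : IsSelfAdjoint absP)
    (habs_sq : absP ∘L absP = P ∘L P)
    (hTS : adjoint T ∘L P = P ∘L S) :
    LoewnerLE ((adjoint T ∘L (absP ∘L T)) ∘L (adjoint T ∘L (absP ∘L T)))
      (((‖T‖ ^ 2 * ‖S‖ ^ 2 : ℝ) : ℂ) • (P ∘L P)) := by
  have key := loewnerLE_adjoint_comp_self_of_norm_le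
    (norm_adjoint_comp_comp_apply_le hP habs_sa habs_sq hTS)
  rwa [(habs_sa.adjoint_conj T).adjoint_eq, hP.adjoint_eq, mul_pow] at key

/-- if `P` is bounded self-adjoint, `|P|` is the positive square root of `P²`,
and `T* P = P S`, then `(T* |P| T)² ≤ ‖T‖² ‖S‖² P²` in the Loewner order. -/
theorem statement10 {H : Type*} [NormedAddCommGroup H] [InnerProductSpace ℂ H]
    [CompleteSpace H]
    (P absP T S : H →L[ℂ] H)
    (hP : IsSelfAdjoint P)
    (habs_sa : IsSelfAdjoint absP)
    (habs_pos : ∀ x : H, 0 ≤ (inner ℂ (absP x) x : ℂ))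
    (habs_sq : absP ∘L absP = P ∘L P)
    (hTS : adjoint T ∘L P = P ∘L S) :
    LoewnerLE ((adjoint T ∘L (absP ∘L T)) ∘L (adjoint T ∘L (absP ∘L T)))
      (((‖T‖ ^ 2 * ‖S‖ ^ 2 : ℝ) : ℂ) • (P ∘L P)) :=
  statement10_general P absP T S hP habs_sa habs_sq hTS

end
end

section
/- Let H be a complex Hilbert space, let P be a bounded self-adjoint operator on H, let |P| denote the positive square root of P², and let T and S be bounded operators on H satisfying T* P = P S. Then T* |P| T ≤ ‖T‖ ‖S‖ · |P| in the Loewner order. -/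
/-! Write `Q = |P|`. From `P T = S* P` we get `T* Q² T = P S S* P ≤ ‖S‖² Q²`. For `ε > 0` the
operator `Q_ε = Q + ε` is invertible with `Q² ≤ Q_ε²`, so `W = Q T Q_ε⁻¹` has `‖W‖ ≤ ‖S‖` and
`Y = Q_ε⁻¹ T* Q T = W* T` has `‖Y‖ ≤ ‖S‖ ‖T‖`. As `Q_ε Y = T* Q T` is self-adjoint, `Y` is similar
(through `Q_ε^{1/2}`) to a self-adjoint operator, whose norm is its spectral radius, hence at
most `‖Y‖` (Reid's inequality). This gives `T* Q T ≤ ‖S‖ ‖T‖ (Q + ε)`; let `ε → 0`. -/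

noncomputable section

open ContinuousLinearMap
open scoped ComplexOrder

open CFC
open scoped Topology

lemma IsSelfAdjoint.units_inv {R : Type*} [Monoid R] [StarMul R] {u : Rˣ}
    (hu : IsSelfAdjoint (u : R)) : IsSelfAdjoint (↑u⁻¹ : R) := by
  rw [IsSelfAdjoint, ← Units.coe_star_inv]
  exact Units.inv_unique hu

lemma le_of_forall_pos_le_add_smul {E : Type*} [TopologicalSpace E] [AddCommMonoid E]
    [Module ℝ E] [ContinuousAdd E] [ContinuousSMul ℝ E] [Preorder E] [OrderClosedTopology E]
    {a b d : E} (h : ∀ ε > (0 : ℝ), a ≤ b + ε • d) : a ≤ b := by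
  have hlim : Filter.Tendsto (fun ε : ℝ => b + ε • d) (𝓝[>] 0) (𝓝 b) :=
    (Continuous.tendsto' (by fun_prop) 0 b (by simp)).mono_left nhdsWithin_le_nhds
  exact ge_of_tendsto hlim (eventually_nhdsWithin_of_forall h)

section CStarAlgebra

variable {A : Type*} [CStarAlgebra A] [PartialOrder A] [StarOrderedRing A]

theorem IsStrictlyPositive.mul_le_norm_smul {b y : A} (hb : IsStrictlyPositive b)
    (hby : IsSelfAdjoint (b * y)) : b * y ≤ ‖y‖ • b := by
  nontriviality A
  obtain ⟨u, hu⟩ := hb.isUnit_cfcSqrt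
  have hu_sa : IsSelfAdjoint (u : A) := hu ▸ (sqrt_nonneg b).isSelfAdjoint
  have huu : (u : A) * u = b := hu ▸ sqrt_mul_sqrt_self b hb.nonneg
  set m := (↑u⁻¹ : A) * (b * y) * ↑u⁻¹
  have hm_sa : IsSelfAdjoint m := hby.conjugate_self hu_sa.units_inv
  have hm_conj : m = u * y * ↑u⁻¹ := by
    simp only [m, ← huu, ← mul_assoc, Units.inv_mul, one_mul]
  have hm_norm : ‖m‖ ≤ ‖y‖ := by
    rw [← hm_sa.toReal_spectralRadius_eq_norm, hm_conj, spectralRadius, spectrum.units_conjugate]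
    exact ENNReal.toReal_le_of_le_ofReal (norm_nonneg y)
      ((spectrum.spectralRadius_le_nnnorm y).trans_eq (ofReal_norm y).symm)
  calc b * y = star (u : A) * m * u := by
        simp only [hu_sa.star_eq, m, ← mul_assoc, Units.mul_inv, one_mul]
        simp only [mul_assoc, Units.inv_mul, mul_one]
    _ ≤ ‖m‖ • (star (u : A) * u) := CStarAlgebra.star_left_conjugate_le_norm_smul
    _ = ‖m‖ • b := by rw [hu_sa.star_eq, huu]
    _ ≤ ‖y‖ • b := smul_le_smul_of_nonneg_right hm_norm hb.nonneg

lemma norm_mul_mul_units_inv_le {q t : A} {b : Aˣ} {c : ℝ} (hc : 0 ≤ c)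
    (h : star t * (star q * q) * t ≤ c ^ 2 • (star q * q)) (hqb : star q * q ≤ star ↑b * ↑b) :
    ‖q * t * ↑b⁻¹‖ ≤ c := by
  set w := q * t * ↑b⁻¹
  have hbb : star (↑b⁻¹ : A) * (star ↑b * ↑b) * ↑b⁻¹ = 1 := by
    rw [← mul_assoc, ← star_mul, Units.mul_inv, star_one, one_mul, Units.mul_inv]
  have hww : star w * w ≤ algebraMap ℝ A (c ^ 2) := calc
    star w * w = star (↑b⁻¹ : A) * (star t * (star q * q) * t) * ↑b⁻¹ := by
      simp only [w, star_mul, mul_assoc]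
    _ ≤ star (↑b⁻¹ : A) * (c ^ 2 • (star q * q)) * ↑b⁻¹ := star_left_conjugate_le_conjugate h _
    _ = c ^ 2 • (star (↑b⁻¹ : A) * (star q * q) * ↑b⁻¹) := by
      rw [mul_smul_comm, smul_mul_assoc]
    _ ≤ c ^ 2 • (star (↑b⁻¹ : A) * (star ↑b * ↑b) * ↑b⁻¹) :=
      smul_le_smul_of_nonneg_left (star_left_conjugate_le_conjugate hqb _) (sq_nonneg c)
    _ = algebraMap ℝ A (c ^ 2) := by rw [hbb, Algebra.algebraMap_eq_smul_one]
  rw [← CStarAlgebra.norm_le_iff_le_algebraMap _ (sq_nonneg c) (star_mul_self_nonneg w),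
    CStarRing.norm_star_mul_self, ← sq] at hww
  exact (pow_le_pow_iff_left₀ (norm_nonneg w) hc two_ne_zero).1 hww

lemma mul_self_le_mul_self_add_smul_one {q : A} (hq : 0 ≤ q) {ε : ℝ} (hε : 0 ≤ ε) :
    q * q ≤ (q + ε • 1) * (q + ε • 1) := by
  have h : (q + ε • 1) * (q + ε • 1) = q * q + ((2 * ε) • q + ε ^ 2 • (1 : A)) := by
    simp only [add_mul, mul_add, smul_mul_assoc, mul_smul_comm, one_mul, mul_one]
    module
  rw [h]
  exact le_add_of_nonneg_right (add_nonneg (smul_nonneg (by positivity) hq)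
    (smul_nonneg (sq_nonneg ε) zero_le_one))

theorem star_mul_mul_le_of_star_mul_sq_mul_le {q t : A} {c : ℝ} (hq : 0 ≤ q) (hc : 0 ≤ c)
    (h : star t * (q * q) * t ≤ c ^ 2 • (q * q)) : star t * q * t ≤ (c * ‖t‖) • q := by
  have hq_sa := hq.isSelfAdjoint
  refine le_of_forall_pos_le_add_smul (d := (c * ‖t‖) • (1 : A)) fun ε hε => ?_
  set b := q + ε • (1 : A)
  have hb : IsStrictlyPositive b := .nonneg_add hq (isStrictlyPositive_one.smul hε)
  obtain ⟨u, hu⟩ := hb.isUnit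
  have hu_sa : IsSelfAdjoint (u : A) := hu ▸ hb.isSelfAdjoint
  have hw : ‖q * t * ↑u⁻¹‖ ≤ c := by
    refine norm_mul_mul_units_inv_le hc (by rwa [hq_sa.star_eq]) ?_
    rw [hq_sa.star_eq, hu_sa.star_eq, hu]
    exact mul_self_le_mul_self_add_smul_one hq hε.le
  set y := (↑u⁻¹ : A) * (star t * q * t)
  have hy : ‖y‖ ≤ c * ‖t‖ := by
    have hy_eq : y = star (q * t * ↑u⁻¹) * t := by
      simp only [y, star_mul, hu_sa.units_inv.star_eq, hq_sa.star_eq, mul_assoc]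
    rw [hy_eq]
    exact (norm_mul_le _ _).trans (by rw [norm_star]; gcongr)
  have hby : b * y = star t * q * t := by rw [← hu, Units.mul_inv_cancel_left]
  calc star t * q * t = b * y := hby.symm
    _ ≤ ‖y‖ • b := hb.mul_le_norm_smul (hby ▸ hq_sa.conjugate' t)
    _ ≤ (c * ‖t‖) • b := smul_le_smul_of_nonneg_right hy hb.nonneg
    _ = (c * ‖t‖) • q + ε • (c * ‖t‖) • (1 : A) := by rw [smul_add, smul_comm]

lemma star_mul_sq_mul_le_of_star_mul_eq {p q t s : A} (hp : IsSelfAdjoint p)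
    (hqp : q * q = p * p) (hts : star t * p = p * s) :
    star t * (q * q) * t ≤ ‖s‖ ^ 2 • (q * q) := by
  have hpt : p * t = star s * p := by
    simpa only [star_mul, star_star, hp.star_eq] using congrArg star hts
  calc star t * (q * q) * t = star (p * t) * (p * t) := by
        rw [hqp, star_mul, hp.star_eq]
        simp only [mul_assoc]
    _ = star p * (s * star s) * p := by
        rw [hpt]
        simp only [star_mul, star_star, mul_assoc]
    _ ≤ ‖s * star s‖ • (star p * p) :=
        CStarAlgebra.star_left_conjugate_le_norm_smul (IsSelfAdjoint.mul_star_self s)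
    _ = ‖s‖ ^ 2 • (q * q) := by rw [CStarRing.norm_self_mul_star, ← sq, hp.star_eq, hqp]

theorem star_mul_mul_le_of_star_mul_eq {p q t s : A} (hp : IsSelfAdjoint p) (hq : 0 ≤ q)
    (hqp : q * q = p * p) (hts : star t * p = p * s) :
    star t * q * t ≤ (‖t‖ * ‖s‖) • q := by
  rw [mul_comm]
  exact star_mul_mul_le_of_star_mul_sq_mul_le hq (norm_nonneg s)
    (star_mul_sq_mul_le_of_star_mul_eq hp hqp hts)

end CStarAlgebra

theorem loewnerLE_iff_le {H : Type*} [NormedAddCommGroup H] [InnerProductSpace ℂ H]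
    {A B : H →L[ℂ] H} : LoewnerLE A B ↔ A ≤ B := by
  have hnonneg (z : ℂ) : 0 ≤ z ↔ (RCLike.re z : ℂ) = z ∧ 0 ≤ RCLike.re z := by
    rw [Complex.nonneg_iff, Complex.ext_iff]
    simp [eq_comm, and_comm]
  simp only [LoewnerLE, le_def, isPositive_iff_complex, hnonneg]

theorem statement12_general {H : Type*} [NormedAddCommGroup H] [InnerProductSpace ℂ H]
    [CompleteSpace H]
    (P absP T S : H →L[ℂ] H)
    (hP : IsSelfAdjoint P)
    (habs_pos : ∀ x : H, 0 ≤ (inner ℂ (absP x) x : ℂ))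
    (habs_sq : absP ∘L absP = P ∘L P)
    (hTS : adjoint T ∘L P = P ∘L S) :
    LoewnerLE (adjoint T ∘L (absP ∘L T)) (((‖T‖ * ‖S‖ : ℝ) : ℂ) • absP) := by
  have habs_nonneg : 0 ≤ absP := loewnerLE_iff_le.1 fun x => by simpa using habs_pos x
  rw [loewnerLE_iff_le, Complex.coe_smul]
  change star T * absP * T ≤ _
  exact star_mul_mul_le_of_star_mul_eq hP habs_nonneg habs_sq hTS

/-- if `P` is bounded self-adjoint, `|P|` is the positive square root of `P²`,
and `T* P = P S`, then `T* |P| T ≤ ‖T‖ ‖S‖ |P|` in the Loewner order. -/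
theorem statement12 {H : Type*} [NormedAddCommGroup H] [InnerProductSpace ℂ H]
    [CompleteSpace H]
    (P absP T S : H →L[ℂ] H)
    (hP : IsSelfAdjoint P)
    (habs_sa : IsSelfAdjoint absP)
    (habs_pos : ∀ x : H, 0 ≤ (inner ℂ (absP x) x : ℂ))
    (habs_sq : absP ∘L absP = P ∘L P)
    (hTS : adjoint T ∘L P = P ∘L S) :
    LoewnerLE (adjoint T ∘L (absP ∘L T)) (((‖T‖ * ‖S‖ : ℝ) : ℂ) • absP) :=
  statement12_general P absP T S hP habs_pos habs_sq hTS

end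
end

section
/- Suppose Φ(z) = Σ_{u=0}^∞ Φ_u z^u with Φ_u bounded operators on 𝒞 and the series converging in operator norm for |z| ≤ r₀, and set Φ♯(z) = Σ_{u=0}^∞ Φ_u* z^u. Let w ∈ ℂ with |w| < r and ξ ∈ 𝒞. Then the function h(z) = −(r²/z) · (Φ♯(r²/z) + Φ(conj(w))) · (1 − (r²/z)·conj(w))^{-1} ξ, defined for |z| > r, belongs to H⁻_{2,r}(𝒞): it has an expansion h(z) = Σ_{m=1}^∞ h_m z^{-m} with Σ_{m=1}^∞ R^{2m} ‖h_m‖² < ∞. -/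
/-!
Put `q = r²/z` and `a = conj w`, so that `‖q‖ < r` and `‖q a‖ < r² < 1`. The function is
`-q (1 - q a)⁻¹ (Φ♯(q) + Φ(a)) ξ`, and `(1 - q a)⁻¹ (Φ♯(q) + Φ(a))` is the Cauchy product of
`Σ (q a)^k` with `Σ q^j (Φ_j* + δ_{j0} Φ(a))`. Abel's lemma makes `‖Φ_j‖ r^j` summable because
`r < r₀`, so the Cauchy product coefficients `T_n` satisfy `Σ r^n ‖T_n‖ < ∞`. Multiplying by
`-q = -r²/z` gives `h_m = -r^{2(m+1)} T_m ξ`, and `R^{2(m+1)} ‖h_m‖² ≤ r² ‖ξ‖² (r^m ‖T_m‖)²`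
is summable.
-/

open ComplexConjugate Finset ContinuousLinearMap

theorem summable_pow_mul_norm_of_summable_pow_smul {𝕜 E : Type*} [NormedField 𝕜]
    [SeminormedAddCommGroup E] [NormedSpace 𝕜 E] {c : ℕ → E} {x : 𝕜}
    (hc : Summable fun n => x ^ n • c n) {ρ : ℝ} (hρ : 0 ≤ ρ) (hρx : ρ < ‖x‖) :
    Summable fun n => ρ ^ n * ‖c n‖ := by
  obtain ⟨M, hM⟩ := hc.tendsto_atTop_zero.norm.bddAbove_range
  have hx : 0 < ‖x‖ := hρ.trans_lt hρx
  refine ((summable_geometric_of_lt_one (by positivity) ((div_lt_one hx).2 hρx)).mul_left M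
    ).of_nonneg_of_le (fun n => by positivity) fun n => ?_
  calc ρ ^ n * ‖c n‖ = (ρ / ‖x‖) ^ n * ‖x ^ n • c n‖ := by
        rw [norm_smul, norm_pow, div_pow]; field_simp
    _ ≤ M * (ρ / ‖x‖) ^ n := by rw [mul_comm]; gcongr; exact hM ⟨n, rfl⟩

theorem Summable.pow_mul_norm_of_le {E : Type*} [SeminormedAddCommGroup E] {f : ℕ → E}
    {ρ σ : ℝ} (hf : Summable fun n => ρ ^ n * ‖f n‖) (hσ : 0 ≤ σ) (hσρ : σ ≤ ρ) :
    Summable fun n => σ ^ n * ‖f n‖ :=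
  hf.of_nonneg_of_le (fun n => by positivity) fun n => by gcongr

theorem Summable.sq_of_nonneg {ι : Type*} {u : ι → ℝ} (hu : Summable u) (h0 : ∀ i, 0 ≤ u i) :
    Summable fun i => u i ^ 2 :=
  (hu.mul_left (∑' i, u i)).of_nonneg_of_le (fun i => sq_nonneg _) fun i => by
    rw [sq]; exact mul_le_mul_of_nonneg_right (hu.le_tsum i fun j _ => h0 j) (h0 i)

section CauchyProduct

variable {𝕜 A : Type*} [NormedField 𝕜] [NormedRing A] [NormedAlgebra 𝕜 A]
  {f g : ℕ → A} {q : 𝕜}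

theorem sum_range_pow_smul_mul_pow_smul (q : 𝕜) (f g : ℕ → A) (n : ℕ) :
    ∑ k ∈ range (n + 1), (q ^ k • f k) * (q ^ (n - k) • g (n - k))
      = q ^ n • ∑ k ∈ range (n + 1), f k * g (n - k) := by
  rw [smul_sum]
  refine sum_congr rfl fun k hk => ?_
  rw [smul_mul_smul_comm, ← pow_add, Nat.add_sub_cancel' (mem_range_succ_iff.mp hk)]

theorem summable_norm_pow_mul_norm_sum_range_mul
    (hf : Summable fun n => ‖q‖ ^ n * ‖f n‖) (hg : Summable fun n => ‖q‖ ^ n * ‖g n‖) :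
    Summable fun n => ‖q‖ ^ n * ‖∑ k ∈ range (n + 1), f k * g (n - k)‖ := by
  simpa only [sum_range_pow_smul_mul_pow_smul, norm_smul, norm_pow] using
    summable_norm_sum_mul_range_of_summable_norm (f := fun k => q ^ k • f k)
      (g := fun k => q ^ k • g k) (by simpa only [norm_smul, norm_pow] using hf)
      (by simpa only [norm_smul, norm_pow] using hg)

theorem hasSum_pow_smul_sum_range_mul [CompleteSpace A]
    (hf : Summable fun n => ‖q‖ ^ n * ‖f n‖) (hg : Summable fun n => ‖q‖ ^ n * ‖g n‖) :
    HasSum (fun n => q ^ n • ∑ k ∈ range (n + 1), f k * g (n - k))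
      ((∑' n, q ^ n • f n) * ∑' n, q ^ n • g n) := by
  simpa only [sum_range_pow_smul_mul_pow_smul] using
    hasSum_sum_range_mul_of_summable_norm (f := fun k => q ^ k • f k)
      (g := fun k => q ^ k • g k) (by simpa only [norm_smul, norm_pow] using hf)
      (by simpa only [norm_smul, norm_pow] using hg)

end CauchyProduct

section Kernel

variable {C : Type*} [NormedAddCommGroup C] [InnerProductSpace ℂ C] [CompleteSpace C]

/-- Taylor coefficients of `Φ♯(q) + x` at `q = 0`. -/
noncomputable def sharpCoeff (Φc : ℕ → C →L[ℂ] C) (x : C →L[ℂ] C) (j : ℕ) : C →L[ℂ] C :=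
  adjoint (Φc j) + (Pi.single 0 x : ℕ → C →L[ℂ] C) j

/-- Taylor coefficients of `(1 - q a)⁻¹ (Φ♯(q) + x)` at `q = 0`. -/
noncomputable def kernelCoeff (Φc : ℕ → C →L[ℂ] C) (a : ℂ) (x : C →L[ℂ] C) (n : ℕ) : C →L[ℂ] C :=
  ∑ k ∈ range (n + 1), (a ^ k • 1) * sharpCoeff Φc x (n - k)

variable {Φc : ℕ → C →L[ℂ] C} {ρ : ℝ}

theorem summable_pow_mul_norm_sharpCoeff (hρ : 0 ≤ ρ) (hΦc : Summable fun n => ρ ^ n * ‖Φc n‖)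
    (x : C →L[ℂ] C) : Summable fun n => ρ ^ n * ‖sharpCoeff Φc x n‖ := by
  have hx : Summable fun n => ρ ^ n * ‖(Pi.single 0 x : ℕ → C →L[ℂ] C) n‖ :=
    summable_of_ne_finset_zero (s := {0}) fun n hn => by
      simp [mem_singleton.not.mp hn]
  refine (hΦc.add hx).of_nonneg_of_le (fun n => by positivity) fun n => ?_
  rw [← mul_add, ← LinearIsometryEquiv.norm_map adjoint (Φc n)]
  exact mul_le_mul_of_nonneg_left (norm_add_le _ _) (pow_nonneg hρ n)

theorem hasSum_pow_smul_sharpCoeff (hΦc : Summable fun n => ρ ^ n * ‖Φc n‖) {q : ℂ}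
    (hq : ‖q‖ ≤ ρ) (x : C →L[ℂ] C) :
    HasSum (fun n => q ^ n • sharpCoeff Φc x n) ((∑' n, q ^ n • adjoint (Φc n)) + x) := by
  have hsharp : Summable fun n => ‖q ^ n • adjoint (Φc n)‖ := by
    simpa only [norm_smul, norm_pow, LinearIsometryEquiv.norm_map] using
      hΦc.pow_mul_norm_of_le (norm_nonneg q) hq
  have hx : HasSum (fun n => q ^ n • (Pi.single 0 x : ℕ → C →L[ℂ] C) n) x := by
    simpa using hasSum_single (f := fun n => q ^ n • (Pi.single 0 x : ℕ → C →L[ℂ] C) n) 0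
      fun n hn => by simp [hn]
  simpa only [sharpCoeff, smul_add] using hsharp.of_norm.hasSum.add hx

theorem summable_pow_mul_norm_pow_smul_one (hρ : 0 ≤ ρ) {a : ℂ} (ha : ρ * ‖a‖ < 1) :
    Summable fun n => ρ ^ n * ‖(a ^ n • 1 : C →L[ℂ] C)‖ :=
  (summable_geometric_of_lt_one (by positivity) ha).of_nonneg_of_le (fun n => by positivity)
    fun n => by
      rw [mul_pow]
      gcongr
      exact (norm_smul_le _ _).trans
        (by rw [norm_pow]; exact mul_le_of_le_one_right (by positivity) norm_id_le)

theorem summable_pow_mul_norm_kernelCoeff (hρ : 0 ≤ ρ) (hΦc : Summable fun n => ρ ^ n * ‖Φc n‖)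
    {a : ℂ} (ha : ρ * ‖a‖ < 1) (x : C →L[ℂ] C) :
    Summable fun n => ρ ^ n * ‖kernelCoeff Φc a x n‖ := by
  have hρ' : ‖(ρ : ℂ)‖ = ρ := Complex.norm_of_nonneg hρ
  simpa only [hρ', kernelCoeff] using summable_norm_pow_mul_norm_sum_range_mul (q := (ρ : ℂ))
    (by simpa only [hρ'] using summable_pow_mul_norm_pow_smul_one (C := C) hρ ha)
    (by simpa only [hρ'] using summable_pow_mul_norm_sharpCoeff hρ hΦc x)

theorem hasSum_pow_smul_kernelCoeff (hΦc : Summable fun n => ρ ^ n * ‖Φc n‖) {a q : ℂ}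
    (hq : ‖q‖ ≤ ρ) (hqa : ‖q * a‖ < 1) (x : C →L[ℂ] C) :
    HasSum (fun n => q ^ n • kernelCoeff Φc a x n)
      ((1 - q * a)⁻¹ • ((∑' n, q ^ n • adjoint (Φc n)) + x)) := by
  have hgeom : HasSum (fun n => q ^ n • (a ^ n • 1 : C →L[ℂ] C)) ((1 - q * a)⁻¹ • 1) := by
    simpa only [smul_smul, mul_pow] using (hasSum_geometric_of_norm_lt_one hqa).smul_const _
  have hsharp := hasSum_pow_smul_sharpCoeff hΦc hq x
  rw [← smul_one_mul, ← hgeom.tsum_eq, ← hsharp.tsum_eq]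
  exact hasSum_pow_smul_sum_range_mul
    (summable_pow_mul_norm_pow_smul_one (norm_nonneg q) (by rwa [← norm_mul]))
    (summable_pow_mul_norm_sharpCoeff (norm_nonneg q) (hΦc.pow_mul_norm_of_le (norm_nonneg q) hq) x)

end Kernel

/-- with `Φ(z) = Σ Φ_u z^u` (operator-norm convergent for `|z| ≤ r₀`) and
`Φ♯(z) = Σ Φ_u* z^u`, for `|w| < r` and `ξ ∈ 𝒞` the function
`h(z) = -(r²/z)(Φ♯(r²/z) + Φ(conj w))(1-(r²/z)·conj w)⁻¹ ξ` (for `|z| > r`) belongs to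
`H⁻_{2,r}(𝒞)`: it has an expansion `h(z) = Σ_{m≥1} h_m z^{-m}` with `Σ R^{2m}‖h_m‖² < ∞`. -/
theorem statement15 {C : Type*} [NormedAddCommGroup C] [InnerProductSpace ℂ C] [CompleteSpace C]
    (r r₀ R : ℝ) (hr0 : 0 < r) (hrr0 : r < r₀) (hr01 : r₀ < 1) (hR : R = 1 / r)
    (Φ : ℂ → C →L[ℂ] C) (Φc : ℕ → C →L[ℂ] C)
    (hΦ : ∀ z : ℂ, ‖z‖ ≤ r₀ → HasSum (fun u : ℕ => z ^ u • Φc u) (Φ z))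
    (w : ℂ) (hw : ‖w‖ < r) (ξ : C) :
    ∃ h : ℕ → C,
      (Summable fun m : ℕ => R ^ (2 * (m + 1)) * ‖h m‖ ^ 2) ∧
      ∀ z : ℂ, r < ‖z‖ →
        (-(r : ℂ) ^ 2 / z) • ((1 - ((r : ℂ) ^ 2 / z) * conj w)⁻¹ •
            (((∑' u : ℕ, ((r : ℂ) ^ 2 / z) ^ u • ContinuousLinearMap.adjoint (Φc u))
                + Φ (conj w)) ξ))
          = ∑' m : ℕ, (z ^ (m + 1))⁻¹ • h m := by
  subst hR
  have hr₀ : 0 < r₀ := hr0.trans hrr0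
  have hΦc : Summable fun n => r ^ n * ‖Φc n‖ :=
    summable_pow_mul_norm_of_summable_pow_smul (hΦ r₀ (by simp [abs_of_pos hr₀])).summable
      hr0.le (by simpa [abs_of_pos hr₀] using hrr0)
  have hw' : ‖conj w‖ < r := by rwa [RCLike.norm_conj]
  have hr1 : r < 1 := hrr0.trans hr01
  set T := kernelCoeff Φc (conj w) (Φ (conj w))
  refine ⟨fun m => (-(r : ℂ) ^ (2 * (m + 1))) • T m ξ, ?_, fun z hz => ?_⟩
  · have hT := summable_pow_mul_norm_kernelCoeff hr0.le hΦc
      (by nlinarith [norm_nonneg (conj w)]) (Φ (conj w))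
    refine ((hT.sq_of_nonneg fun n => by positivity).mul_left (r ^ 2 * ‖ξ‖ ^ 2)).of_nonneg_of_le
      (fun n => by positivity) fun n => ?_
    calc (1 / r) ^ (2 * (n + 1)) * ‖(-(r : ℂ) ^ (2 * (n + 1))) • T n ξ‖ ^ 2
        = r ^ 2 * (r ^ n * ‖T n ξ‖) ^ 2 := by
          rw [norm_smul]
          simp only [one_div, inv_pow, norm_neg, norm_pow, Complex.norm_real, Real.norm_eq_abs,
            abs_of_pos hr0]
          field_simp
          ring
      _ ≤ r ^ 2 * (r ^ n * (‖T n‖ * ‖ξ‖)) ^ 2 := by gcongr; exact le_opNorm _ _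
      _ = r ^ 2 * ‖ξ‖ ^ 2 * (r ^ n * ‖T n‖) ^ 2 := by ring
  · have hz0 : z ≠ 0 := norm_pos_iff.mp (hr0.trans hz)
    set q := (r : ℂ) ^ 2 / z with hq_def
    have hq : ‖q‖ < r := by
      rw [norm_div, norm_pow, Complex.norm_of_nonneg hr0.le, div_lt_iff₀ (hr0.trans hz)]
      nlinarith
    have hqa : ‖q * conj w‖ < 1 := by
      rw [norm_mul]; nlinarith [norm_nonneg q, norm_nonneg (conj w)]
    have hsum := ((hasSum_pow_smul_kernelCoeff hΦc hq.le hqa (Φ (conj w))).mapL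
      (apply ℂ C ξ)).const_smul (-q)
    rw [neg_div]
    refine (HasSum.tsum_eq ?_).symm
    convert hsum using 1
    · funext n
      simp only [apply_apply, smul_apply, smul_smul]
      congr 1
      rw [hq_def]
      ring
    · rfl
end
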